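/- Let T_n be the set of words of length n over {0,1,3} that contain no consecutive pair (0,3). For i, j ∈ T_n, the equality Π(i) = Π(j) holds if and only if i = j, where Π(i) = Σ_{k=1}^n i_k 3^{-(k-1)}. -/

import Mathlib

/-- The alphabet `A = {0, 1, 3}`. -/
def A : Set ℕ := {0, 1, 3}

/-- The natural projection `Π(i) = Σ_{k=1}^n i_k 3^{-(k-1)}`. -/
noncomputable def proj : List ℕ → ℝ
  | [] => 0
  | a :: t => (a : ℝ) + proj t / 3

/-- `T_n`: words of length `n` over `A` containing no consecutive pair `(0,3)`. -/
def Tset (n : ℕ) : Set (List ℕ) :=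
  {l | l.length = n ∧ (∀ x ∈ l, x ∈ A) ∧ ¬ [0, 3] <:+: l}

lemma proj_nonneg (l : List ℕ) : 0 ≤ proj l := by
  induction l with
  | nil => simp [proj]
  | cons a t ih => simp only [proj]; positivity

lemma proj_le (l : List ℕ) (h : ∀ x ∈ l, x ∈ A) : proj l ≤ 9/2 := by
  induction l with
  | nil => norm_num [proj]
  | cons a t ih =>
    have ha : a ∈ A := h a List.mem_cons_self
    have ha3 : (a : ℝ) ≤ 3 := by
      simp only [A, Set.mem_insert_iff, Set.mem_singleton_iff] at ha
      rcases ha with rfl | rfl | rfl <;> norm_num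
    have ht := ih (fun x hx => h x (List.mem_cons_of_mem _ hx))
    simp only [proj]; linarith

lemma proj_lt_three (t : List ℕ) (ht : ∀ x ∈ t, x ∈ A)
    (h : ¬ [0, 3] <:+: (0 :: t)) : proj t < 3 := by
  cases t with
  | nil => norm_num [proj]
  | cons c r =>
    have hc : c ∈ A := ht c List.mem_cons_self
    have hc3 : c ≠ 3 := by rintro rfl; exact h ⟨[], r, by simp⟩
    have hc1 : (c : ℝ) ≤ 1 := by
      simp only [A, Set.mem_insert_iff, Set.mem_singleton_iff] at hc
      have : c ≤ 1 := by omega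
      exact_mod_cast this
    have hr := proj_le r (fun x hx => ht x (List.mem_cons_of_mem _ hx))
    simp only [proj]; linarith

lemma not_infix_tail {a : ℕ} {t : List ℕ} (h : ¬ [0, 3] <:+: (a :: t)) :
    ¬ [0, 3] <:+: t := fun h' => h (h'.trans (List.suffix_cons a t).isInfix)

lemma proj_inj (i : List ℕ) : ∀ j : List ℕ, i.length = j.length →
    (∀ x ∈ i, x ∈ A) → (∀ x ∈ j, x ∈ A) →
    ¬ [0, 3] <:+: i → ¬ [0, 3] <:+: j → proj i = proj j → i = j := by
  induction i with
  | nil =>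
    intro j hlen _ _ _ _ _
    cases j with
    | nil => rfl
    | cons b s => simp at hlen
  | cons a t ih =>
    intro j hlen hi hj hni hnj heq
    cases j with
    | nil => simp at hlen
    | cons b s =>
      have ht : ∀ x ∈ t, x ∈ A := fun x hx => hi x (List.mem_cons_of_mem _ hx)
      have hs : ∀ x ∈ s, x ∈ A := fun x hx => hj x (List.mem_cons_of_mem _ hx)
      have h0t := proj_nonneg t
      have h0s := proj_nonneg s
      have h1t := proj_le t ht
      have h1s := proj_le s hs
      have ha : a ∈ A := hi a List.mem_cons_self
      have hb : b ∈ A := hj b List.mem_cons_self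
      simp only [A, Set.mem_insert_iff, Set.mem_singleton_iff] at ha hb
      simp only [proj] at heq
      have hab : a = b := by
        rcases ha with rfl | rfl | rfl <;> rcases hb with rfl | rfl | rfl
        · rfl
        · have := proj_lt_three t ht hni
          push_cast at heq; linarith
        · push_cast at heq; linarith
        · have := proj_lt_three s hs hnj
          push_cast at heq; linarith
        · rfl
        · push_cast at heq; linarith
        · push_cast at heq; linarith
        · push_cast at heq; linarith
        · rfl
      subst hab
      have hts : proj t = proj s := by linarith
      have := ih s (by simpa using hlen) ht hs (not_infix_tail hni) (not_infix_tail hnj) hts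
      rw [this]

/-- For `i, j ∈ T_n`, `Π(i) = Π(j)` iff `i = j`. -/
theorem stmt_3 (n : ℕ) (i j : List ℕ) (hi : i ∈ Tset n) (hj : j ∈ Tset n) :
    proj i = proj j ↔ i = j := by
  obtain ⟨hli, hai, hni⟩ := hi
  obtain ⟨hlj, haj, hnj⟩ := hj
  constructor
  · exact proj_inj i j (hli.trans hlj.symm) hai haj hni hnj
  · rintro rfl; rfl
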